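/- arXiv:1709.01000 — 7 statements merged into one kernel-verified Lean document; each statement's English description precedes it below -/
import Mathlib

section
/- For all constants C_E ≥ 1, L ≥ 0, M ≥ 0 there exists C ≥ 0 such that the following holds. Let E be a real Banach space, A : E →L[ℝ] E with ‖exp(-tA)‖ ≤ C_E for all t ≥ 0, let g : E → E be Lipschitz continuous with constant L, let h > 0, and let u : ℝ → E be differentiable on [0,h] with u'(t) = -A(u t) + g(u t) on [0,h], t ↦ g(u t) continuous, u 0 = u₀, and ‖g(u s)‖ ≤ M for all s ∈ [0,h]. Then for every ζ ∈ [0,1], ‖u(ζh) - exp(-ζhA)(u₀) - h • ∫_{σ=0}^{ζ} exp(-(ζ-σ)hA)( g(exp(-σhA)(u₀)) ) dσ‖ ≤ C · h². -/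
/-! Duhamel's formula writes `u t - exp(-tA) u₀` as `∫₀ᵗ exp(-(t-s)A) g(u s) ds`, which has size
at most `C_E M t`. Replacing `u s` by the free flow `exp(-sA) u₀` inside `g` therefore changes the
integrand by at most `C_E L C_E M s`, so the whole error is `O(t²)`; the substitution `s = σh`
turns this into the stated expansion at `t = ζh`. -/

open Set

/-- The operator exponential `exp(tA)` of a continuous linear operator. -/
noncomputable def opexp {E : Type*} [NormedAddCommGroup E] [NormedSpace ℝ E]
    [CompleteSpace E] (A : E →L[ℝ] E) (t : ℝ) : E →L[ℝ] E :=
  NormedSpace.exp (t • A)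

section

variable {E : Type*} [NormedAddCommGroup E] [NormedSpace ℝ E] [CompleteSpace E]
  (A : E →L[ℝ] E)

@[fun_prop]
lemma continuous_opexp : Continuous (opexp A) :=
  continuous_iff_continuousAt.2 fun s => (hasDerivAt_exp_smul_const A s).continuousAt

lemma hasDerivAt_opexp_sub_const (t s : ℝ) :
    HasDerivAt (fun s => opexp A (s - t)) (opexp A (s - t) * A) s :=
  (hasDerivAt_exp_smul_const A (s - t)).comp_sub_const s t

lemma norm_opexp_sub_apply_le {C_E s t : ℝ} (hA : ∀ t : ℝ, 0 ≤ t → ‖opexp A (-t)‖ ≤ C_E)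
    (hst : s ≤ t) (x : E) : ‖opexp A (s - t) x‖ ≤ C_E * ‖x‖ :=
  (opexp A (s - t)).le_of_opNorm_le (by simpa using hA (t - s) (by linarith)) x

lemma intervalIntegrable_opexp_sub_apply {f : ℝ → E} {t : ℝ} (ht : 0 ≤ t)
    (hf : ContinuousOn f (Icc 0 t)) :
    IntervalIntegrable (fun s => opexp A (s - t) (f s)) MeasureTheory.volume 0 t :=
  ((continuous_opexp A).comp (continuous_sub_right t)).continuousOn.clm_apply hf
    |>.intervalIntegrable_of_Icc ht

lemma sub_opexp_eq_integral {u f : ℝ → E} {t : ℝ} (ht : 0 ≤ t)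
    (hu : ∀ s ∈ Icc 0 t, HasDerivAt u (-(A (u s)) + f s) s) (hf : ContinuousOn f (Icc 0 t)) :
    u t - opexp A (-t) (u 0) = ∫ s in 0..t, opexp A (s - t) (f s) := by
  have hderiv : ∀ s ∈ Icc 0 t,
      HasDerivAt (fun s => opexp A (s - t) (u s)) (opexp A (s - t) (f s)) s := by
    intro s hs
    convert (hasDerivAt_opexp_sub_const A t s).clm_apply (hu s hs) using 1
    simp only [mul_apply_eq_comp, map_add, map_neg]
    abel
  rw [intervalIntegral.integral_eq_sub_of_hasDerivAt (by rwa [uIcc_of_le ht])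
    (intervalIntegrable_opexp_sub_apply A ht hf)]
  simp [opexp]

lemma norm_sub_opexp_le {u f : ℝ → E} {C_E M t : ℝ} (hA : ∀ t : ℝ, 0 ≤ t → ‖opexp A (-t)‖ ≤ C_E)
    (ht : 0 ≤ t) (hu : ∀ s ∈ Icc 0 t, HasDerivAt u (-(A (u s)) + f s) s)
    (hf : ContinuousOn f (Icc 0 t)) (hfM : ∀ s ∈ Icc 0 t, ‖f s‖ ≤ M) :
    ‖u t - opexp A (-t) (u 0)‖ ≤ C_E * M * t := by
  have hCE : 0 ≤ C_E := (norm_nonneg _).trans (hA 0 le_rfl)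
  rw [sub_opexp_eq_integral A ht hu hf]
  have hbound : ∀ s ∈ uIoc 0 t, ‖opexp A (s - t) (f s)‖ ≤ C_E * M := by
    intro s hs
    rw [uIoc_of_le ht] at hs
    exact (norm_opexp_sub_apply_le A hA hs.2 _).trans
      (mul_le_mul_of_nonneg_left (hfM s (Ioc_subset_Icc_self hs)) hCE)
  simpa [abs_of_nonneg ht] using intervalIntegral.norm_integral_le_of_norm_le_const hbound

lemma norm_sub_opexp_sub_integral_le {u : ℝ → E} {g : E → E} {K : NNReal} {C_E M t : ℝ}
    (hA : ∀ t : ℝ, 0 ≤ t → ‖opexp A (-t)‖ ≤ C_E) (hg : LipschitzWith K g) (ht : 0 ≤ t)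
    (hu : ∀ s ∈ Icc 0 t, HasDerivAt u (-(A (u s)) + g (u s)) s)
    (hgu : ContinuousOn (fun s => g (u s)) (Icc 0 t)) (hgM : ∀ s ∈ Icc 0 t, ‖g (u s)‖ ≤ M) :
    ‖u t - opexp A (-t) (u 0) - ∫ s in 0..t, opexp A (s - t) (g (opexp A (-s) (u 0)))‖ ≤
      C_E ^ 2 * K * M * t ^ 2 := by
  have hCE : 0 ≤ C_E := (norm_nonneg _).trans (hA 0 le_rfl)
  have hM : 0 ≤ M := (norm_nonneg _).trans (hgM 0 ⟨le_rfl, ht⟩)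
  have hint : IntervalIntegrable (fun s => opexp A (s - t) (g (opexp A (-s) (u 0))))
      MeasureTheory.volume 0 t :=
    have := hg.continuous
    (by fun_prop : Continuous _).intervalIntegrable 0 t
  have hbound : ∀ s ∈ uIoc 0 t, ‖opexp A (s - t) (g (u s)) -
      opexp A (s - t) (g (opexp A (-s) (u 0)))‖ ≤ C_E * (K * (C_E * M * t)) := by
    intro s hs
    rw [uIoc_of_le ht] at hs
    have hsub : Icc 0 s ⊆ Icc 0 t := Icc_subset_Icc_right hs.2
    have hdev : ‖u s - opexp A (-s) (u 0)‖ ≤ C_E * M * t :=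
      (norm_sub_opexp_le A hA hs.1.le (fun r hr => hu r (hsub hr)) (hgu.mono hsub)
        fun r hr => hgM r (hsub hr)).trans (by gcongr; exact hs.2)
    rw [← map_sub]
    refine (norm_opexp_sub_apply_le A hA hs.2 _).trans (mul_le_mul_of_nonneg_left ?_ hCE)
    exact (hg.norm_sub_le _ _).trans (mul_le_mul_of_nonneg_left hdev K.coe_nonneg)
  rw [sub_opexp_eq_integral A ht hu hgu,
    ← intervalIntegral.integral_sub (intervalIntegrable_opexp_sub_apply A ht hgu) hint]
  calc _ ≤ C_E * (K * (C_E * M * t)) * |t - 0| :=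
        intervalIntegral.norm_integral_le_of_norm_le_const hbound
    _ = C_E ^ 2 * K * M * t ^ 2 := by rw [sub_zero, abs_of_nonneg ht]; ring

end

theorem stmt_3_general (C_E L M : ℝ) (hL : 0 ≤ L) (hM : 0 ≤ M) :
    ∃ C : ℝ, 0 ≤ C ∧
      ∀ (E : Type) [NormedAddCommGroup E] [NormedSpace ℝ E] [CompleteSpace E]
        (A : E →L[ℝ] E),
        (∀ t : ℝ, 0 ≤ t → ‖opexp A (-t)‖ ≤ C_E) →
        ∀ g : E → E, LipschitzWith (Real.toNNReal L) g →
        ∀ h : ℝ, 0 < h →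
        ∀ (u : ℝ → E) (u₀ : E),
          (∀ t ∈ Set.Icc (0 : ℝ) h, HasDerivAt u (-(A (u t)) + g (u t)) t) →
          ContinuousOn (fun t => g (u t)) (Set.Icc (0 : ℝ) h) →
          u 0 = u₀ →
          (∀ s ∈ Set.Icc (0 : ℝ) h, ‖g (u s)‖ ≤ M) →
          ∀ ζ ∈ Set.Icc (0 : ℝ) 1,
            ‖u (ζ * h) - opexp A (-(ζ * h)) u₀ -
              h • ∫ σ in (0 : ℝ)..ζ,
                opexp A (-((ζ - σ) * h)) (g (opexp A (-(σ * h)) u₀))‖ ≤ C * h ^ 2 := by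
  refine ⟨C_E ^ 2 * L * M, by positivity, ?_⟩
  intro E _ _ _ A hA g hg h hh u u₀ hu hgu hu₀ hgM ζ ⟨hζ0, hζ1⟩
  subst hu₀
  have hζh : ζ * h ≤ h := mul_le_of_le_one_left hh.le hζ1
  have hsub : Icc 0 (ζ * h) ⊆ Icc 0 h := Icc_subset_Icc_right hζh
  have key := norm_sub_opexp_sub_integral_le A hA hg (by positivity)
    (fun s hs => hu s (hsub hs)) (hgu.mono hsub) fun s hs => hgM s (hsub hs)
  rw [Real.coe_toNNReal L hL] at key
  have hrescale : h • ∫ σ in (0 : ℝ)..ζ,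
      opexp A (-((ζ - σ) * h)) (g (opexp A (-(σ * h)) (u 0))) =
      ∫ s in 0..ζ * h, opexp A (s - ζ * h) (g (opexp A (-s) (u 0))) := by
    have hsubst := intervalIntegral.smul_integral_comp_mul_right (a := 0) (b := ζ)
      (fun s => opexp A (s - ζ * h) (g (opexp A (-s) (u 0)))) h
    rw [zero_mul] at hsubst
    rw [← hsubst]
    refine congrArg (h • ·) (intervalIntegral.integral_congr fun σ _ => ?_)
    rw [show -((ζ - σ) * h) = σ * h - ζ * h by ring]
  rw [hrescale]
  calc _ ≤ C_E ^ 2 * L * M * (ζ * h) ^ 2 := key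
    _ ≤ C_E ^ 2 * L * M * h ^ 2 := by gcongr

/-- First-order expansion of the exact solution of `u' + Au = g(u)` in terms of elementary
integrals: `u(ζh) = exp(-ζhA)u₀ + h ∫₀^ζ exp(-(ζ-σ)hA) g(exp(-σhA)u₀) dσ + O(h²)`, with a
constant depending only on `C_E`, `L` and `M`. -/
theorem stmt_3 (C_E L M : ℝ) (hCE : 1 ≤ C_E) (hL : 0 ≤ L) (hM : 0 ≤ M) :
    ∃ C : ℝ, 0 ≤ C ∧
      ∀ (E : Type) [NormedAddCommGroup E] [NormedSpace ℝ E] [CompleteSpace E]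
        (A : E →L[ℝ] E),
        (∀ t : ℝ, 0 ≤ t → ‖opexp A (-t)‖ ≤ C_E) →
        ∀ g : E → E, LipschitzWith (Real.toNNReal L) g →
        ∀ h : ℝ, 0 < h →
        ∀ (u : ℝ → E) (u₀ : E),
          (∀ t ∈ Set.Icc (0 : ℝ) h, HasDerivAt u (-(A (u t)) + g (u t)) t) →
          ContinuousOn (fun t => g (u t)) (Set.Icc (0 : ℝ) h) →
          u 0 = u₀ →
          (∀ s ∈ Set.Icc (0 : ℝ) h, ‖g (u s)‖ ≤ M) →
          ∀ ζ ∈ Set.Icc (0 : ℝ) 1,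
            ‖u (ζ * h) - opexp A (-(ζ * h)) u₀ -
              h • ∫ σ in (0 : ℝ)..ζ,
                opexp A (-((ζ - σ) * h)) (g (opexp A (-(σ * h)) u₀))‖ ≤ C * h ^ 2 :=
  stmt_3_general C_E L M hL hM
end

section
/- For all constants C_E ≥ 1, L ≥ 0, M ≥ 0, s ∈ ℕ, and all Runge–Kutta coefficients b : Fin s → ℝ, c : Fin s → ℝ, a : Fin s → Fin s → ℝ with a i j = 0 whenever j ≥ i, there exists C ≥ 0 such that the following holds. Let E be a real Banach space, A : E →L[ℝ] E with ‖exp(-tA)‖ ≤ C_E for all t ∈ ℝ, let g : E → E be Lipschitz with constant L and satisfy ‖g(x)‖ ≤ M for all x ∈ E, let 0 < h ≤ 1 and u₀ ∈ E. Define the Lawson stages U_i = exp(-c_i hA)u₀ + h • ∑_{j<i} a_{ij} exp(-(c_i-c_j)hA)(g(U_j)) and the step u₁ = exp(-hA)u₀ + h • ∑_{i} b_i exp(-(1-c_i)hA)(g(U_i)). Then ‖u₁ - exp(-hA)u₀ - h • ∑_i b_i exp(-(1-c_i)hA)( g(exp(-c_i hA)u₀) )‖ ≤ C · h². -/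
open Finset

theorem norm_sum_smul_clm_apply_le {ι E F : Type*} [NormedAddCommGroup E] [NormedSpace ℝ E]
    [NormedAddCommGroup F] [NormedSpace ℝ F] (S : Finset ι) (w : ι → ℝ) (T : ι → E →L[ℝ] F) (x : ι → E) {K : ℝ}
    (hT : ∀ i ∈ S, ‖T i‖ ≤ K) :
    ‖∑ i ∈ S, w i • T i (x i)‖ ≤ K * ∑ i ∈ S, |w i| * ‖x i‖ := by
  rw [mul_sum]
  refine (norm_sum_le _ _).trans (sum_le_sum fun i hi => ?_)
  rw [norm_smul, Real.norm_eq_abs, mul_left_comm]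
  exact mul_le_mul_of_nonneg_left
    ((T i).le_of_opNorm_le (hT i hi) (x i)) (abs_nonneg _)

section Lawson

variable {E : Type} [NormedAddCommGroup E] [NormedSpace ℝ E] [CompleteSpace E]
  {A : E →L[ℝ] E} {C_E M h : ℝ} {g : E → E} {s : ℕ} {c : Fin s → ℝ} {a : Fin s → Fin s → ℝ}
  {u₀ : E} {U : Fin s → E}

theorem norm_lawson_stage_sub_le (hA : ∀ t : ℝ, ‖opexp A (-t)‖ ≤ C_E)
    (hgM : ∀ x : E, ‖g x‖ ≤ M) (hM : 0 ≤ M) (hh : 0 ≤ h)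
    (hU : ∀ i : Fin s, U i = opexp A (-(c i * h)) u₀ +
      h • ∑ j ∈ univ.filter (fun j => j < i), a i j • opexp A (-((c i - c j) * h)) (g (U j)))
    (i : Fin s) :
    ‖U i - opexp A (-(c i * h)) u₀‖ ≤ h * (C_E * (M * ∑ j, |a i j|)) := by
  have hCE : 0 ≤ C_E := (norm_nonneg _).trans (hA 0)
  rw [hU i, add_sub_cancel_left, norm_smul, Real.norm_of_nonneg hh]
  refine mul_le_mul_of_nonneg_left ?_ hh
  refine (norm_sum_smul_clm_apply_le _ _ _ _ fun j _ => hA _).trans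
    (mul_le_mul_of_nonneg_left ?_ hCE)
  calc ∑ j ∈ univ.filter (fun j => j < i), |a i j| * ‖g (U j)‖
      ≤ ∑ j ∈ univ.filter (fun j => j < i), |a i j| * M :=
        sum_le_sum fun j _ => mul_le_mul_of_nonneg_left (hgM _) (abs_nonneg _)
    _ ≤ ∑ j, |a i j| * M :=
        sum_le_sum_of_subset_of_nonneg (filter_subset _ _) fun j _ _ => by positivity
    _ = M * ∑ j, |a i j| := by rw [← sum_mul, mul_comm]

theorem lawson_step_sub_quadrature (b : Fin s → ℝ) (u₁ : E)
    (hu₁ : u₁ = opexp A (-h) u₀ + h • ∑ i, b i • opexp A (-((1 - c i) * h)) (g (U i))) :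
    u₁ - opexp A (-h) u₀ -
        h • ∑ i, b i • opexp A (-((1 - c i) * h)) (g (opexp A (-(c i * h)) u₀)) =
      h • ∑ i, b i • opexp A (-((1 - c i) * h)) (g (U i) - g (opexp A (-(c i * h)) u₀)) := by
  simp only [hu₁, add_sub_cancel_left, ← smul_sub, ← sum_sub_distrib, map_sub]

end Lawson

theorem stmt_5_general (C_E L M : ℝ) (hM : 0 ≤ M)
    (s : ℕ) (b c : Fin s → ℝ) (a : Fin s → Fin s → ℝ) :
    ∃ C : ℝ, 0 ≤ C ∧
      ∀ (E : Type) [NormedAddCommGroup E] [NormedSpace ℝ E] [CompleteSpace E]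
        (A : E →L[ℝ] E),
        (∀ t : ℝ, ‖opexp A (-t)‖ ≤ C_E) →
        ∀ g : E → E, LipschitzWith (Real.toNNReal L) g →
          (∀ x : E, ‖g x‖ ≤ M) →
        ∀ h : ℝ, 0 < h → h ≤ 1 →
        ∀ (u₀ : E) (U : Fin s → E) (u₁ : E),
          (∀ i : Fin s, U i = opexp A (-(c i * h)) u₀ +
            h • ∑ j ∈ Finset.univ.filter (fun j => j < i),
              a i j • opexp A (-((c i - c j) * h)) (g (U j))) →
          u₁ = opexp A (-h) u₀ +
            h • ∑ i : Fin s, b i • opexp A (-((1 - c i) * h)) (g (U i)) →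
          ‖u₁ - opexp A (-h) u₀ -
            h • ∑ i : Fin s,
              b i • opexp A (-((1 - c i) * h)) (g (opexp A (-(c i * h)) u₀))‖
            ≤ C * h ^ 2 := by
  set K : NNReal := L.toNNReal
  refine ⟨C_E ^ 2 * (K : ℝ) * M * ∑ i, |b i| * ∑ j, |a i j|, by positivity, ?_⟩
  intro E _ _ _ A hA g hg hgM h hh _ u₀ U u₁ hU hu₁
  have hCE : 0 ≤ C_E := (norm_nonneg _).trans (hA 0)
  have hnode (i : Fin s) : ‖g (U i) - g (opexp A (-(c i * h)) u₀)‖ ≤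
      K * (h * (C_E * (M * ∑ j, |a i j|))) := by
    rw [← dist_eq_norm]
    refine (hg.dist_le_mul _ _).trans (mul_le_mul_of_nonneg_left ?_ K.2)
    exact (dist_eq_norm _ _).trans_le (norm_lawson_stage_sub_le hA hgM hM hh.le hU i)
  rw [lawson_step_sub_quadrature b u₁ hu₁, norm_smul, Real.norm_of_nonneg hh.le]
  calc h * ‖∑ i, b i • opexp A (-((1 - c i) * h)) (g (U i) - g (opexp A (-(c i * h)) u₀))‖
      ≤ h * (C_E * ∑ i, |b i| * (K * (h * (C_E * (M * ∑ j, |a i j|))))) :=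
        mul_le_mul_of_nonneg_left ((norm_sum_smul_clm_apply_le _ _ _ _ fun i _ => hA _).trans
          (mul_le_mul_of_nonneg_left (sum_le_sum fun i _ =>
            mul_le_mul_of_nonneg_left (hnode i) (abs_nonneg _)) hCE)) hh.le
    _ = C_E ^ 2 * K * M * (∑ i, |b i| * ∑ j, |a i j|) * h ^ 2 := by
        simp only [mul_sum, sum_mul]
        exact sum_congr rfl fun i _ => sum_congr rfl fun j _ => by ring

/-- First-order expansion of one step of an `s`-stage Lawson method in terms of elementary
quadrature rules: `u₁ = exp(-hA)u₀ + h ∑ᵢ bᵢ exp(-(1-cᵢ)hA) g(exp(-cᵢhA)u₀) + O(h²)`,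
with a constant depending only on `C_E`, `L`, `M` and the Runge–Kutta coefficients. -/
theorem stmt_5 (C_E L M : ℝ) (hCE : 1 ≤ C_E) (hL : 0 ≤ L) (hM : 0 ≤ M)
    (s : ℕ) (b c : Fin s → ℝ) (a : Fin s → Fin s → ℝ)
    (ha : ∀ i j : Fin s, j ≥ i → a i j = 0) :
    ∃ C : ℝ, 0 ≤ C ∧
      ∀ (E : Type) [NormedAddCommGroup E] [NormedSpace ℝ E] [CompleteSpace E]
        (A : E →L[ℝ] E),
        (∀ t : ℝ, ‖opexp A (-t)‖ ≤ C_E) →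
        ∀ g : E → E, LipschitzWith (Real.toNNReal L) g →
          (∀ x : E, ‖g x‖ ≤ M) →
        ∀ h : ℝ, 0 < h → h ≤ 1 →
        ∀ (u₀ : E) (U : Fin s → E) (u₁ : E),
          (∀ i : Fin s, U i = opexp A (-(c i * h)) u₀ +
            h • ∑ j ∈ Finset.univ.filter (fun j => j < i),
              a i j • opexp A (-((c i - c j) * h)) (g (U j))) →
          u₁ = opexp A (-h) u₀ +
            h • ∑ i : Fin s, b i • opexp A (-((1 - c i) * h)) (g (U i)) →
          ‖u₁ - opexp A (-h) u₀ -
            h • ∑ i : Fin s,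
              b i • opexp A (-((1 - c i) * h)) (g (opexp A (-(c i * h)) u₀))‖
            ≤ C * h ^ 2 :=
  stmt_5_general C_E L M hM s b c a
end

section
/- For all constants C_E ≥ 1, M ≥ 0, s ∈ ℕ, and all Runge–Kutta coefficients b : Fin s → ℝ, c : Fin s → ℝ, a : Fin s → Fin s → ℝ with a i j = 0 whenever j ≥ i, there exists C ≥ 0 such that the following holds. Let E be a real Banach space, A : E →L[ℝ] E with ‖exp(-tA)‖ ≤ C_E for all t ∈ ℝ, let g : E → E be twice continuously (Fréchet) differentiable with ‖g(x)‖ ≤ M, ‖g'(x)‖ ≤ M, ‖g''(x)‖ ≤ M for all x ∈ E, let 0 < h ≤ 1 and u₀ ∈ E. Define the Lawson stages U_i = exp(-c_i hA)u₀ + h • ∑_{j<i} a_{ij} exp(-(c_i-c_j)hA)(g(U_j)) and the step u₁ = exp(-hA)u₀ + h • ∑_i b_i exp(-(1-c_i)hA)(g(U_i)). Writing g_{c_i} = g(exp(-c_i hA)u₀) and g'_{c_i} = g'(exp(-c_i hA)u₀), one has ‖u₁ - exp(-hA)u₀ - h • ∑_i b_i exp(-(1-c_i)hA) g_{c_i}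 - h² • ∑_i b_i exp(-(1-c_i)hA)( g'_{c_i}( ∑_{j<i} a_{ij} exp(-(c_i-c_j)hA) g_{c_j} ) )‖ ≤ C · h³. -/
open Finset

section Calculus

variable {E F : Type*} [NormedAddCommGroup E] [NormedSpace ℝ E]
  [NormedAddCommGroup F] [NormedSpace ℝ F] {f : E → F} {M : ℝ}

theorem norm_fderiv_sub_le_of_norm_iteratedFDeriv_two_le (hf : ContDiff ℝ 2 f)
    (hf₂ : ∀ x, ‖iteratedFDeriv ℝ 2 f x‖ ≤ M) (x y : E) :
    ‖fderiv ℝ f y - fderiv ℝ f x‖ ≤ M * ‖y - x‖ := by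
  have hdiff : Differentiable ℝ (fderiv ℝ f) :=
    (hf.fderiv_right (m := 1) le_rfl).differentiable one_ne_zero
  refine convex_univ.norm_image_sub_le_of_norm_fderiv_le (fun z _ => hdiff z) (fun z _ => ?_)
    (Set.mem_univ x) (Set.mem_univ y)
  rw [← norm_iteratedFDeriv_one, norm_iteratedFDeriv_fderiv]
  exact hf₂ z

theorem norm_sub_sub_fderiv_apply_le (hf : ContDiff ℝ 2 f)
    (hf₂ : ∀ x, ‖iteratedFDeriv ℝ 2 f x‖ ≤ M) (x y : E) :
    ‖f y - f x - fderiv ℝ f x (y - x)‖ ≤ M * ‖y - x‖ ^ 2 := by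
  have hM : 0 ≤ M := (norm_nonneg _).trans (hf₂ x)
  have hdiff : Differentiable ℝ f := hf.differentiable two_ne_zero
  have hbound : ∀ z ∈ Metric.closedBall x ‖y - x‖, ‖fderiv ℝ f z - fderiv ℝ f x‖ ≤ M * ‖y - x‖ :=
    fun z hz => (norm_fderiv_sub_le_of_norm_iteratedFDeriv_two_le hf hf₂ x z).trans
      (mul_le_mul_of_nonneg_left (mem_closedBall_iff_norm.mp hz) hM)
  calc ‖f y - f x - fderiv ℝ f x (y - x)‖ ≤ M * ‖y - x‖ * ‖y - x‖ :=
        (convex_closedBall x _).norm_image_sub_le_of_norm_fderiv_le' (fun z _ => hdiff z) hbound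
          (Metric.mem_closedBall_self (norm_nonneg _)) (mem_closedBall_iff_norm.mpr le_rfl)
    _ = M * ‖y - x‖ ^ 2 := by ring

end Calculus

theorem norm_sum_smul_apply_le {ι E F : Type*} [NormedAddCommGroup E] [NormedSpace ℝ E]
    [NormedAddCommGroup F] [NormedSpace ℝ F] (S : Finset ι) (a : ι → ℝ) (T : ι → E →L[ℝ] F)
    (x : ι → E) {K B : ℝ} (hT : ∀ i ∈ S, ‖T i‖ ≤ K) (hx : ∀ i ∈ S, ‖x i‖ ≤ B) :
    ‖∑ i ∈ S, a i • T i (x i)‖ ≤ (∑ i ∈ S, |a i|) * (K * B) := by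
  rw [sum_mul]
  refine (norm_sum_le _ _).trans (sum_le_sum fun i hi => ?_)
  rw [norm_smul, Real.norm_eq_abs]
  refine mul_le_mul_of_nonneg_left ?_ (abs_nonneg _)
  exact (T i).le_of_opNorm_le_of_le (hT i hi) (hx i hi)

section Lawson

variable {E : Type*} [NormedAddCommGroup E] [NormedSpace ℝ E] {s : ℕ}
  (a : Fin s → Fin s → ℝ) (T : Fin s → Fin s → E →L[ℝ] E)

/-- For the Lawson method, `Tᵢⱼ = e^{-(cᵢ-cⱼ)hA}`. -/
def stageSum (y : Fin s → E) (i : Fin s) : E :=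
  ∑ j ∈ univ.filter (· < i), a i j • T i j (y j)

theorem stageSum_sub (y z : Fin s → E) (i : Fin s) :
    stageSum a T y i - stageSum a T z i = stageSum a T (y - z) i := by
  simp only [stageSum, Pi.sub_apply, map_sub, smul_sub, sum_sub_distrib]

variable {a T}

theorem norm_stageSum_le {K B : ℝ} (hT : ∀ i j, ‖T i j‖ ≤ K) {y : Fin s → E}
    (hy : ∀ j, ‖y j‖ ≤ B) (i : Fin s) :
    ‖stageSum a T y i‖ ≤ (∑ i, ∑ j, |a i j|) * (K * B) := by
  have hK : 0 ≤ K := (norm_nonneg _).trans (hT i i)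
  have hB : 0 ≤ B := (norm_nonneg _).trans (hy i)
  have hrow : ∑ j ∈ univ.filter (· < i), |a i j| ≤ ∑ i, ∑ j, |a i j| :=
    calc ∑ j ∈ univ.filter (· < i), |a i j| ≤ ∑ j, |a i j| :=
          sum_le_sum_of_subset_of_nonneg (filter_subset _ _) fun j _ _ => abs_nonneg _
      _ ≤ ∑ i, ∑ j, |a i j| :=
          single_le_sum (f := fun i => ∑ j, |a i j|)
            (fun i _ => sum_nonneg fun j _ => abs_nonneg _) (mem_univ i)
  exact (norm_sum_smul_apply_le _ _ _ _ (fun j _ => hT i j) (fun j _ => hy j)).trans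
    (mul_le_mul_of_nonneg_right hrow (by positivity))

variable {g : E → E} {M K h : ℝ} {U V : Fin s → E}

theorem norm_stage_sub_le (hg₀ : ∀ x, ‖g x‖ ≤ M) (hT : ∀ i j, ‖T i j‖ ≤ K)
    (hU : ∀ i, U i = V i + h • stageSum a T (fun j => g (U j)) i) (i : Fin s) :
    ‖U i - V i‖ ≤ |h| * ((∑ i, ∑ j, |a i j|) * (K * M)) := by
  rw [hU i, add_sub_cancel_left, norm_smul, Real.norm_eq_abs]
  exact mul_le_mul_of_nonneg_left (norm_stageSum_le hT (fun j => hg₀ _) i) (abs_nonneg h)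

theorem norm_stage_defect_le (hg : ContDiff ℝ 2 g) (hg₀ : ∀ x, ‖g x‖ ≤ M)
    (hg₁ : ∀ x, ‖fderiv ℝ g x‖ ≤ M) (hg₂ : ∀ x, ‖iteratedFDeriv ℝ 2 g x‖ ≤ M)
    (hT : ∀ i j, ‖T i j‖ ≤ K) (hU : ∀ i, U i = V i + h • stageSum a T (fun j => g (U j)) i)
    (i : Fin s) :
    ‖g (U i) - g (V i) - h • fderiv ℝ g (V i) (stageSum a T (fun j => g (V j)) i)‖ ≤
      h ^ 2 * (2 * M ^ 3 * ((∑ i, ∑ j, |a i j|) * K) ^ 2) := by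
  set Sa := ∑ i, ∑ j, |a i j|
  have hM : 0 ≤ M := (norm_nonneg _).trans (hg₀ 0)
  have hUV := norm_stage_sub_le hg₀ hT hU
  have hincr : ‖stageSum a T (fun j => g (U j)) i - stageSum a T (fun j => g (V j)) i‖ ≤
      Sa * (K * (M * (|h| * (Sa * (K * M))))) := by
    rw [stageSum_sub]
    refine norm_stageSum_le hT (fun j => ?_) i
    exact (convex_univ.norm_image_sub_le_of_norm_fderiv_le
      (fun z _ => (hg.differentiable two_ne_zero) z) (fun z _ => hg₁ z) (Set.mem_univ _)
      (Set.mem_univ _)).trans (mul_le_mul_of_nonneg_left (hUV j) hM)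
  have hsplit : g (U i) - g (V i) - h • fderiv ℝ g (V i) (stageSum a T (fun j => g (V j)) i) =
      (g (U i) - g (V i) - fderiv ℝ g (V i) (U i - V i)) + fderiv ℝ g (V i)
        (h • (stageSum a T (fun j => g (U j)) i - stageSum a T (fun j => g (V j)) i)) := by
    have hstep : U i - V i = h • stageSum a T (fun j => g (U j)) i := by
      rw [hU i, add_sub_cancel_left]
    rw [hstep]
    simp only [map_sub, map_smul, smul_sub]
    abel
  have htaylor : ‖g (U i) - g (V i) - fderiv ℝ g (V i) (U i - V i)‖ ≤
      M * (|h| * (Sa * (K * M))) ^ 2 :=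
    (norm_sub_sub_fderiv_apply_le hg hg₂ _ _).trans
      (mul_le_mul_of_nonneg_left (pow_le_pow_left₀ (norm_nonneg _) (hUV i) 2) hM)
  have hlinear : ‖fderiv ℝ g (V i)
      (h • (stageSum a T (fun j => g (U j)) i - stageSum a T (fun j => g (V j)) i))‖ ≤
      M * (|h| * (Sa * (K * (M * (|h| * (Sa * (K * M))))))) := by
    refine (fderiv ℝ g (V i)).le_of_opNorm_le_of_le (hg₁ _) ?_
    rw [norm_smul, Real.norm_eq_abs]
    exact mul_le_mul_of_nonneg_left hincr (abs_nonneg h)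
  calc _ ≤ _ := hsplit ▸ norm_add_le_of_le htaylor hlinear
    _ = h ^ 2 * (2 * M ^ 3 * (Sa * K) ^ 2) := by rw [← sq_abs h]; ring

theorem norm_update_sub_expansion_le (hg : ContDiff ℝ 2 g) (hg₀ : ∀ x, ‖g x‖ ≤ M)
    (hg₁ : ∀ x, ‖fderiv ℝ g x‖ ≤ M) (hg₂ : ∀ x, ‖iteratedFDeriv ℝ 2 g x‖ ≤ M)
    (hT : ∀ i j, ‖T i j‖ ≤ K) (hU : ∀ i, U i = V i + h • stageSum a T (fun j => g (U j)) i)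
    (b : Fin s → ℝ) {P : Fin s → E →L[ℝ] E} (hP : ∀ i, ‖P i‖ ≤ K) :
    ‖h • ∑ i, b i • P i (g (U i)) - h • ∑ i, b i • P i (g (V i)) -
        h ^ 2 • ∑ i, b i • P i (fderiv ℝ g (V i) (stageSum a T (fun j => g (V j)) i))‖ ≤
      (∑ i, |b i|) * K * (2 * M ^ 3 * ((∑ i, ∑ j, |a i j|) * K) ^ 2) * |h| ^ 3 := by
  have hfactor : h • ∑ i, b i • P i (g (U i)) - h • ∑ i, b i • P i (g (V i)) -
      h ^ 2 • ∑ i, b i • P i (fderiv ℝ g (V i) (stageSum a T (fun j => g (V j)) i)) =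
      h • ∑ i, b i • P i (g (U i) - g (V i) -
        h • fderiv ℝ g (V i) (stageSum a T (fun j => g (V j)) i)) := by
    simp only [map_sub, map_smul, smul_sub, sum_sub_distrib, smul_sum, smul_smul, sq,
      mul_comm, mul_left_comm]
  rw [hfactor, norm_smul, Real.norm_eq_abs]
  calc _ ≤ |h| * ((∑ i, |b i|) * (K * (h ^ 2 * (2 * M ^ 3 * ((∑ i, ∑ j, |a i j|) * K) ^ 2)))) :=
        mul_le_mul_of_nonneg_left (norm_sum_smul_apply_le _ _ _ _ (fun i _ => hP i)
          (fun i _ => norm_stage_defect_le hg hg₀ hg₁ hg₂ hT hU i)) (abs_nonneg h)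
    _ = _ := by rw [← sq_abs h]; ring

end Lawson

theorem stmt_6_general (C_E M : ℝ) (hCE : 1 ≤ C_E) (hM : 0 ≤ M)
    (s : ℕ) (b c : Fin s → ℝ) (a : Fin s → Fin s → ℝ) :
    ∃ C : ℝ, 0 ≤ C ∧
      ∀ (E : Type) [NormedAddCommGroup E] [NormedSpace ℝ E] [CompleteSpace E]
        (A : E →L[ℝ] E),
        (∀ t : ℝ, ‖opexp A (-t)‖ ≤ C_E) →
        ∀ g : E → E, ContDiff ℝ 2 g →
          (∀ x : E, ‖g x‖ ≤ M) →
          (∀ x : E, ‖fderiv ℝ g x‖ ≤ M) →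
          (∀ x : E, ‖iteratedFDeriv ℝ 2 g x‖ ≤ M) →
        ∀ h : ℝ, 0 < h → h ≤ 1 →
        ∀ (u₀ : E) (U : Fin s → E) (u₁ : E),
          (∀ i : Fin s, U i = opexp A (-(c i * h)) u₀ +
            h • ∑ j ∈ Finset.univ.filter (fun j => j < i),
              a i j • opexp A (-((c i - c j) * h)) (g (U j))) →
          u₁ = opexp A (-h) u₀ +
            h • ∑ i : Fin s, b i • opexp A (-((1 - c i) * h)) (g (U i)) →
          ‖u₁ - opexp A (-h) u₀ -
            h • ∑ i : Fin s,
              b i • opexp A (-((1 - c i) * h)) (g (opexp A (-(c i * h)) u₀)) -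
            h ^ 2 • ∑ i : Fin s,
              b i • opexp A (-((1 - c i) * h))
                ((fderiv ℝ g (opexp A (-(c i * h)) u₀))
                  (∑ j ∈ Finset.univ.filter (fun j => j < i),
                    a i j • opexp A (-((c i - c j) * h))
                      (g (opexp A (-(c j * h)) u₀))))‖
            ≤ C * h ^ 3 := by
  have hCE₀ : 0 ≤ C_E := zero_le_one.trans hCE
  refine ⟨(∑ i, |b i|) * C_E * (2 * M ^ 3 * ((∑ i, ∑ j, |a i j|) * C_E) ^ 2), by positivity, ?_⟩
  intro E _ _ _ A hE g hg hg₀ hg₁ hg₂ h hh _ u₀ U u₁ hU hu₁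
  rw [hu₁, add_sub_cancel_left]
  calc _ ≤ _ := norm_update_sub_expansion_le (T := fun i j => opexp A (-((c i - c j) * h)))
        (V := fun i => opexp A (-(c i * h)) u₀) (P := fun i => opexp A (-((1 - c i) * h)))
        hg hg₀ hg₁ hg₂ (fun _ _ => hE _) hU b (fun _ => hE _)
    _ = _ := by rw [abs_of_pos hh]

/-- Second-order expansion of one step of an `s`-stage Lawson method in terms of elementary
quadrature rules: `u₁` equals `exp(-hA)u₀` plus the elementary quadrature rules of the trees
of orders one and two up to `O(h³)`, with a constant depending only on `C_E`, `M` and the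
Runge–Kutta coefficients. -/
theorem stmt_6 (C_E M : ℝ) (hCE : 1 ≤ C_E) (hM : 0 ≤ M)
    (s : ℕ) (b c : Fin s → ℝ) (a : Fin s → Fin s → ℝ)
    (ha : ∀ i j : Fin s, j ≥ i → a i j = 0) :
    ∃ C : ℝ, 0 ≤ C ∧
      ∀ (E : Type) [NormedAddCommGroup E] [NormedSpace ℝ E] [CompleteSpace E]
        (A : E →L[ℝ] E),
        (∀ t : ℝ, ‖opexp A (-t)‖ ≤ C_E) →
        ∀ g : E → E, ContDiff ℝ 2 g →
          (∀ x : E, ‖g x‖ ≤ M) →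
          (∀ x : E, ‖fderiv ℝ g x‖ ≤ M) →
          (∀ x : E, ‖iteratedFDeriv ℝ 2 g x‖ ≤ M) →
        ∀ h : ℝ, 0 < h → h ≤ 1 →
        ∀ (u₀ : E) (U : Fin s → E) (u₁ : E),
          (∀ i : Fin s, U i = opexp A (-(c i * h)) u₀ +
            h • ∑ j ∈ Finset.univ.filter (fun j => j < i),
              a i j • opexp A (-((c i - c j) * h)) (g (U j))) →
          u₁ = opexp A (-h) u₀ +
            h • ∑ i : Fin s, b i • opexp A (-((1 - c i) * h)) (g (U i)) →
          ‖u₁ - opexp A (-h) u₀ -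
            h • ∑ i : Fin s,
              b i • opexp A (-((1 - c i) * h)) (g (opexp A (-(c i * h)) u₀)) -
            h ^ 2 • ∑ i : Fin s,
              b i • opexp A (-((1 - c i) * h))
                ((fderiv ℝ g (opexp A (-(c i * h)) u₀))
                  (∑ j ∈ Finset.univ.filter (fun j => j < i),
                    a i j • opexp A (-((c i - c j) * h))
                      (g (opexp A (-(c j * h)) u₀))))‖
            ≤ C * h ^ 3 :=
  stmt_6_general C_E M hCE hM s b c a
end

section
/- Let E be a real Banach space, A : E →L[ℝ] E continuous linear, m ≥ 1 a natural number, and let g : E → E be m-times continuously (Fréchet) differentiable (C^m). For f : E → E differentiable define ad_A f : E → E by (ad_A f)(x) = A(f(x)) - (Df)(x)(A x), and let ad_A^[m] g denote the m-fold iterate of ad_A applied to g. Fix h ∈ ℝ, ζ ∈ ℝ, w ∈ E. Then the function Ψ(σ) = exp(-(ζ-σ)hA)( g(exp(-σhA) w) ) is m-times differentiable on ℝ and its m-th derivative satisfies Ψ^{(m)}(σ) = h^m • exp(-(ζ-σ)hA)( (ad_A^[m] g)(exp(-σhA) w) ) for all σ ∈ ℝ. -/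
/-- The Lie commutator `ad_A f = [F_A, f]` of a vector field `f` with the linear vector
field `F_A(x) = Ax`: `(ad_A f)(x) = A(f(x)) - (Df)(x)(Ax)`. -/
noncomputable def adA {E : Type*} [NormedAddCommGroup E] [NormedSpace ℝ E]
    (A : E →L[ℝ] E) (f : E → E) : E → E :=
  fun x => A (f x) - (fderiv ℝ f x) (A x)

/-!
Write `Ψ_f(σ) = exp(-(ζ-σ)hA) f(exp(-σhA) w)` for an arbitrary vector field `f`. Since
`exp(tA)` commutes with `A`, differentiating `Ψ_f` gives `h Ψ_{ad_A f}`; iterating, with each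
step consuming one derivative of `g`, gives `Ψ_g⁽ᵏ⁾ = hᵏ Ψ_{ad_Aᵏ g}` for `k ≤ m`.
-/

noncomputable def elemIntegrand {E : Type*} [NormedAddCommGroup E] [NormedSpace ℝ E]
    [CompleteSpace E] (A : E →L[ℝ] E) (h ζ : ℝ) (w : E) (f : E → E) (σ : ℝ) : E :=
  opexp A (-((ζ - σ) * h)) (f (opexp A (-(σ * h)) w))

section

variable {E : Type*} [NormedAddCommGroup E] [NormedSpace ℝ E]

theorem contDiff_adA {n : WithTop ℕ∞} (A : E →L[ℝ] E) {g : E → E}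
    (hg : ContDiff ℝ (n + 1) g) : ContDiff ℝ n (adA A g) :=
  (A.contDiff.comp (hg.of_le le_self_add)).sub ((hg.fderiv_right le_rfl).clm_apply A.contDiff)

theorem contDiff_iterate_adA {n : WithTop ℕ∞} (A : E →L[ℝ] E) {g : E → E} (k : ℕ)
    (hg : ContDiff ℝ (n + k) g) : ContDiff ℝ n ((adA A)^[k] g) := by
  induction k generalizing n with
  | zero => simpa using hg
  | succ k ih =>
    rw [Function.iterate_succ_apply']
    refine contDiff_adA A (ih ?_)
    rwa [add_right_comm, ← Nat.cast_one (R := WithTop ℕ∞), add_assoc, ← Nat.cast_add]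

theorem differentiable_iterate_adA (A : E →L[ℝ] E) {g : E → E} {k : ℕ}
    (hg : ContDiff ℝ (k + 1) g) : Differentiable ℝ ((adA A)^[k] g) := by
  refine (contDiff_iterate_adA (n := 1) A k ?_).differentiable one_ne_zero
  rwa [add_comm]

variable [CompleteSpace E]

theorem opexp_apply_comm (A : E →L[ℝ] E) (t : ℝ) (v : E) :
    opexp A t (A v) = A (opexp A t v) :=
  congrArg (· v) ((Commute.refl A).smul_left t).exp_left

theorem HasDerivAt.opexp (A : E →L[ℝ] E) {s : ℝ → ℝ} {s' σ : ℝ} (hs : HasDerivAt s s' σ) :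
    HasDerivAt (fun σ => opexp A (s σ)) (s' • (opexp A (s σ) * A)) σ :=
  (hasDerivAt_exp_smul_const (𝕂 := ℝ) A (s σ)).scomp σ hs

/-- The inner factor `σ ↦ exp(-σhA) w` has derivative `-h A exp(-σhA) w`, so the chain rule
produces `-h Df(·)(A·)`, while the outer factor contributes `h A f(·)`. -/
theorem hasDerivAt_elemIntegrand (A : E →L[ℝ] E) (h ζ : ℝ) (w : E) {f : E → E}
    (hf : Differentiable ℝ f) (σ : ℝ) :
    HasDerivAt (elemIntegrand A h ζ w f) (h • elemIntegrand A h ζ w (adA A f) σ) σ := by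
  have hout : HasDerivAt (fun σ : ℝ => opexp A (-((ζ - σ) * h)))
      (h • (opexp A (-((ζ - σ) * h)) * A)) σ :=
    HasDerivAt.opexp A (by simpa using ((hasDerivAt_id σ).const_sub ζ |>.mul_const h).fun_neg)
  have hin : HasDerivAt (fun σ : ℝ => opexp A (-(σ * h)) w)
      ((-h) • A (opexp A (-(σ * h)) w)) σ := by
    have := (HasDerivAt.opexp A (by simpa using ((hasDerivAt_id σ).mul_const h).fun_neg)).clm_apply
      (hasDerivAt_const σ w)
    simpa [opexp_apply_comm] using this
  refine (hout.clm_apply ((hf _).hasFDerivAt.comp_hasDerivAt σ hin)).congr_deriv ?_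
  simp only [elemIntegrand, adA, map_sub, smul_sub, smul_apply, mul_apply_eq_comp,
    Function.comp_apply, map_smul, map_neg, neg_smul]
  abel

theorem iteratedDeriv_elemIntegrand (A : E →L[ℝ] E) (h ζ : ℝ) (w : E) {g : E → E} {k : ℕ}
    (hg : ContDiff ℝ k g) :
    iteratedDeriv k (elemIntegrand A h ζ w g) = h ^ k • elemIntegrand A h ζ w ((adA A)^[k] g) := by
  induction k with
  | zero => simp
  | succ k ih =>
    rw [iteratedDeriv_succ, ih (hg.of_le (by exact_mod_cast k.le_succ))]
    funext σ
    have hdiff := differentiable_iterate_adA A (by exact_mod_cast hg)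
    rw [((hasDerivAt_elemIntegrand A h ζ w hdiff σ).const_smul (h ^ k)).deriv,
      Function.iterate_succ_apply', smul_smul, ← pow_succ]
    rfl

end

theorem stmt_9_general {E : Type*} [NormedAddCommGroup E] [NormedSpace ℝ E] [CompleteSpace E]
    (A : E →L[ℝ] E) (m : ℕ) (g : E → E) (hg : ContDiff ℝ m g)
    (h ζ : ℝ) (w : E) :
    (∀ k : ℕ, k < m →
      Differentiable ℝ (iteratedDeriv k
        (fun σ : ℝ => opexp A (-((ζ - σ) * h)) (g (opexp A (-(σ * h)) w))))) ∧
    ∀ σ : ℝ,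
      iteratedDeriv m (fun σ : ℝ => opexp A (-((ζ - σ) * h)) (g (opexp A (-(σ * h)) w))) σ =
        h ^ m • opexp A (-((ζ - σ) * h)) (((adA A)^[m] g) (opexp A (-(σ * h)) w)) := by
  refine ⟨fun k hk => ?_, fun σ => congrFun (iteratedDeriv_elemIntegrand A h ζ w hg) σ⟩
  have hgk : ContDiff ℝ (k + 1) g := hg.of_le (by exact_mod_cast hk)
  change Differentiable ℝ (iteratedDeriv k (elemIntegrand A h ζ w g))
  rw [iteratedDeriv_elemIntegrand A h ζ w (hgk.of_le (by simp))]
  exact fun σ => ((hasDerivAt_elemIntegrand A h ζ w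
    (differentiable_iterate_adA A hgk) σ).const_smul (h ^ k)).differentiableAt

/-- Lemma 5.3(a): for `g ∈ Cᵐ`, the function `Ψ(σ) = exp(-(ζ-σ)hA) g(exp(-σhA)w)` is
`m`-times differentiable with `Ψ⁽ᵐ⁾(σ) = hᵐ • exp(-(ζ-σ)hA) ([F_A,g]_m)(exp(-σhA)w)`,
where `[F_A,g]_m` is the `m`-fold iterated Lie commutator. -/
theorem stmt_9 {E : Type*} [NormedAddCommGroup E] [NormedSpace ℝ E] [CompleteSpace E]
    (A : E →L[ℝ] E) (m : ℕ) (hm : 1 ≤ m) (g : E → E) (hg : ContDiff ℝ m g)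
    (h ζ : ℝ) (w : E) :
    (∀ k : ℕ, k < m →
      Differentiable ℝ (iteratedDeriv k
        (fun σ : ℝ => opexp A (-((ζ - σ) * h)) (g (opexp A (-(σ * h)) w))))) ∧
    ∀ σ : ℝ,
      iteratedDeriv m (fun σ : ℝ => opexp A (-((ζ - σ) * h)) (g (opexp A (-(σ * h)) w))) σ =
        h ^ m • opexp A (-((ζ - σ) * h)) (((adA A)^[m] g) (opexp A (-(σ * h)) w)) :=
  stmt_9_general A m g hg h ζ w
end

section
/- Let E be a real Banach space, A : E →L[ℝ] E continuous linear, k ∈ ℕ, and let g : E → E be (k+1)-times continuously (Fréchet) differentiable. Then for all w ∈ E and all v : Fin k → E, the k-th iterated Fréchet derivative of the map x ↦ (Dg)(x)(A x) satisfies D^k( x ↦ (Dg)(x)(Ax) )(w)(v₁,…,v_k) = D^{k+1}g(w)(A w, v₁,…,v_k) + ∑_{j=1}^{k} D^k g(w)(v₁,…,v_{j-1}, A v_j, v_{j+1},…,v_k), where D^k g(w) denotes the k-th iterated (symmetric multilinear) Fréchet derivative of g at w. -/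
/-!
Differentiating `x ↦ g'(x)(Ax)` in a direction `h` gives, by the symmetry of the second
derivative, `g_h'(x)(Ax) + g'(x)(Ah)` with `g_h = x ↦ g'(x) h`: the same expression for `g_h`
plus a first-order term. Peeling off the last direction of `v` and inducting on `k`, with `g`
generalized, yields the identity, since `D^k g_h(w)(u) = D^{k+1} g(w)(u, h)`.
-/

open Fin Function

section

variable {𝕜 E F : Type*} [RCLike 𝕜] [NormedAddCommGroup E] [NormedSpace 𝕜 E]
  [NormedAddCommGroup F] [NormedSpace 𝕜 F]

theorem iteratedFDeriv_fderiv_apply_const_apply {k : ℕ} {g : E → F}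
    (hg : ContDiff 𝕜 (k + 1) g) (x h : E) (m : Fin k → E) :
    iteratedFDeriv 𝕜 k (fun y => fderiv 𝕜 g y h) x m =
      iteratedFDeriv 𝕜 (k + 1) g x (snoc m h) := by
  rw [iteratedFDeriv_clm_apply_const_apply (hg.fderiv_right le_rfl) le_rfl,
    iteratedFDeriv_succ_apply_right, init_snoc, snoc_last]

theorem fderiv_fderiv_apply_clm_apply {g : E → F} (hg : ContDiff 𝕜 2 g) (A : E →L[𝕜] E)
    (x h : E) :
    fderiv 𝕜 (fun y => fderiv 𝕜 g y (A y)) x h =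
      fderiv 𝕜 (fun y => fderiv 𝕜 g y h) x (A x) + fderiv 𝕜 g x (A h) := by
  have hg' : Differentiable 𝕜 (fderiv 𝕜 g) := (hg.fderiv_right le_rfl).differentiable one_ne_zero
  have hsymm : IsSymmSndFDerivAt 𝕜 g x := hg.contDiffAt.isSymmSndFDerivAt (by simp)
  rw [fderiv_clm_apply (hg' x) A.differentiableAt,
    fderiv_clm_apply (hg' x) (differentiableAt_const h)]
  simp [hsymm h (A x), add_comm]

theorem iteratedFDeriv_fderiv_apply_clm_apply {k : ℕ} {g : E → F} (hg : ContDiff 𝕜 (k + 1) g)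
    (A : E →L[𝕜] E) (w : E) (v : Fin k → E) :
    iteratedFDeriv 𝕜 k (fun x => fderiv 𝕜 g x (A x)) w v =
      iteratedFDeriv 𝕜 (k + 1) g w (cons (A w) v) +
        ∑ j : Fin k, iteratedFDeriv 𝕜 k g w (update v j (A (v j))) := by
  induction k generalizing g w with
  | zero => simp
  | succ k ih =>
    obtain ⟨u, h, rfl⟩ : ∃ u h, v = snoc u h := ⟨init v, v (last k), (snoc_init_self v).symm⟩
    have hg2 : ContDiff 𝕜 2 g := hg.of_le (by norm_cast; omega)
    have hg' : ContDiff 𝕜 (k + 1) g := hg.of_le (by norm_cast; omega)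
    have hf : ContDiff 𝕜 (k + 1) (fun x => fderiv 𝕜 g x (A x)) :=
      (hg.fderiv_right (by norm_cast)).clm_apply A.contDiff
    have hgh : ContDiff 𝕜 (k + 1) (fun x => fderiv 𝕜 g x h) :=
      (hg.fderiv_right (by norm_cast)).clm_apply contDiff_const
    have hgAh : ContDiff 𝕜 k (fun x => fderiv 𝕜 g x (A h)) :=
      (hg.fderiv_right (by norm_cast; omega)).clm_apply contDiff_const
    calc iteratedFDeriv 𝕜 (k + 1) (fun x => fderiv 𝕜 g x (A x)) w (snoc u h)
        = iteratedFDeriv 𝕜 k (fun y => fderiv 𝕜 (fun x => fderiv 𝕜 g x (A x)) y h) w u :=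
          (iteratedFDeriv_fderiv_apply_const_apply hf w h u).symm
      _ = iteratedFDeriv 𝕜 k (fun y => fderiv 𝕜 (fun x => fderiv 𝕜 g x h) y (A y)) w u +
            iteratedFDeriv 𝕜 k (fun y => fderiv 𝕜 g y (A h)) w u := by
          simp only [fderiv_fderiv_apply_clm_apply hg2]
          rw [fun_iteratedFDeriv_add_apply
            ((hgh.fderiv_right le_rfl).clm_apply A.contDiff).contDiffAt hgAh.contDiffAt]
          rfl
      _ = iteratedFDeriv 𝕜 (k + 1 + 1) g w (snoc (cons (A w) u) h) +
            ∑ j : Fin k, iteratedFDeriv 𝕜 (k + 1) g w (snoc (update u j (A (u j))) h) +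
            iteratedFDeriv 𝕜 (k + 1) g w (snoc u (A h)) := by
          simp only [ih hgh, iteratedFDeriv_fderiv_apply_const_apply hg,
            iteratedFDeriv_fderiv_apply_const_apply hg']
      _ = _ := by
          rw [sum_univ_castSucc, add_assoc, cons_snoc_eq_snoc_cons, snoc_last, update_snoc_last]
          simp only [snoc_castSucc, snoc_update]

end

theorem stmt_11_general {E : Type*} [NormedAddCommGroup E] [NormedSpace ℝ E]
    (A : E →L[ℝ] E) (k : ℕ) (g : E → E) (hg : ContDiff ℝ (k + 1 : ℕ) g)
    (w : E) (v : Fin k → E) :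
    iteratedFDeriv ℝ k (fun x => (fderiv ℝ g x) (A x)) w v =
      iteratedFDeriv ℝ (k + 1) g w (Fin.cons (A w) v) +
        ∑ j : Fin k, iteratedFDeriv ℝ k g w (Function.update v j (A (v j))) :=
  iteratedFDeriv_fderiv_apply_clm_apply hg A w v

/-- Equation (5.9): Leibniz-type identity for the `k`-th iterated Fréchet derivative of
`x ↦ (Dg)(x)(Ax)`:
`D^k(x ↦ g'(x)Ax)(w)(v₁,…,v_k) = g⁽ᵏ⁺¹⁾(w)(Aw,v₁,…,v_k) + ∑ⱼ g⁽ᵏ⁾(w)(v₁,…,Avⱼ,…,v_k)`. -/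
theorem stmt_11 {E : Type*} [NormedAddCommGroup E] [NormedSpace ℝ E] [CompleteSpace E]
    (A : E →L[ℝ] E) (k : ℕ) (g : E → E) (hg : ContDiff ℝ (k + 1 : ℕ) g)
    (w : E) (v : Fin k → E) :
    iteratedFDeriv ℝ k (fun x => (fderiv ℝ g x) (A x)) w v =
      iteratedFDeriv ℝ (k + 1) g w (Fin.cons (A w) v) +
        ∑ j : Fin k, iteratedFDeriv ℝ k g w (Function.update v j (A (v j))) :=
  stmt_11_general A k g hg w v
end

section
/- Let E be a real Banach space, A : E →L[ℝ] E continuous linear, and C_E ≥ 1 with ‖exp(-tA)‖ ≤ C_E for all t ≥ 0. Let g : E → E be Lipschitz continuous with constant L, and h ≥ 0. Define N(v) = ⨆_{t ≥ 0} ‖exp(-tA)v‖ and the Lawson–Euler step Φ(v) = exp(-hA)(v + h • g(v)). Then for all u, v ∈ E: N(Φ(u) - Φ(v)) ≤ (1 + h·C_E·L) · N(u - v). -/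
/-!
The norm `N(w) = sup_{t ≥ 0} ‖T t w‖` of a uniformly bounded family `T` with `T 0 = 1` is
equivalent to `‖·‖`, subadditive, and, when `T` is a semigroup, every `T h` with `h ≥ 0`
is non-expansive for it: `T t (T h w) = T (t + h) w` runs over a subset of the orbit of `w`.
Hence in `N` the Lawson–Euler step `w ↦ T h (w + h g w)` is Lipschitz with constant
`1 + h C L`: the linear part costs nothing and the nonlinear part costs
`N(h (g u - g v)) ≤ C h L ‖u - v‖ ≤ C h L N(u - v)`.
-/

open Set NNReal

section OrbitSupNorm

variable {E : Type*} [NormedAddCommGroup E] [NormedSpace ℝ E]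

noncomputable def orbitSupNorm (T : ℝ → E →L[ℝ] E) (w : E) : ℝ :=
  ⨆ t : Ici (0 : ℝ), ‖T t w‖

variable {T : ℝ → E →L[ℝ] E} {C : ℝ}

theorem bddAbove_range_norm_orbit (hT : ∀ t, 0 ≤ t → ‖T t‖ ≤ C) (w : E) :
    BddAbove (range fun t : Ici (0 : ℝ) => ‖T t w‖) :=
  ⟨C * ‖w‖, by rintro _ ⟨t, rfl⟩; exact (T t).le_of_opNorm_le (hT t t.2) w⟩

theorem orbitSupNorm_le (hT : ∀ t, 0 ≤ t → ‖T t‖ ≤ C) (w : E) :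
    orbitSupNorm T w ≤ C * ‖w‖ :=
  ciSup_le fun t => (T t).le_of_opNorm_le (hT t t.2) w

theorem norm_apply_le_orbitSupNorm (hT : ∀ t, 0 ≤ t → ‖T t‖ ≤ C) {t : ℝ} (ht : 0 ≤ t)
    (w : E) : ‖T t w‖ ≤ orbitSupNorm T w :=
  le_ciSup (bddAbove_range_norm_orbit hT w) ⟨t, ht⟩

theorem norm_le_orbitSupNorm (hT : ∀ t, 0 ≤ t → ‖T t‖ ≤ C) (hT₀ : T 0 = 1) (w : E) :
    ‖w‖ ≤ orbitSupNorm T w := by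
  simpa [hT₀] using norm_apply_le_orbitSupNorm hT le_rfl w

theorem orbitSupNorm_add_le (hT : ∀ t, 0 ≤ t → ‖T t‖ ≤ C) (w₁ w₂ : E) :
    orbitSupNorm T (w₁ + w₂) ≤ orbitSupNorm T w₁ + orbitSupNorm T w₂ :=
  ciSup_le fun t => calc
    ‖T t (w₁ + w₂)‖ ≤ ‖T t w₁‖ + ‖T t w₂‖ := by rw [map_add]; exact norm_add_le _ _
    _ ≤ orbitSupNorm T w₁ + orbitSupNorm T w₂ :=
      add_le_add (norm_apply_le_orbitSupNorm hT t.2 w₁) (norm_apply_le_orbitSupNorm hT t.2 w₂)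

theorem orbitSupNorm_apply_le (hT : ∀ t, 0 ≤ t → ‖T t‖ ≤ C)
    (hT_add : ∀ s t, 0 ≤ s → 0 ≤ t → T (s + t) = T s * T t) {h : ℝ} (hh : 0 ≤ h) (w : E) :
    orbitSupNorm T (T h w) ≤ orbitSupNorm T w :=
  ciSup_le fun t => by
    change ‖(T t * T h) w‖ ≤ _
    rw [← hT_add t h t.2 hh]
    exact norm_apply_le_orbitSupNorm hT (add_nonneg t.2 hh) w

theorem orbitSupNorm_lawsonEuler_sub_le (hT : ∀ t, 0 ≤ t → ‖T t‖ ≤ C) (hT₀ : T 0 = 1)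
    (hT_add : ∀ s t, 0 ≤ s → 0 ≤ t → T (s + t) = T s * T t) {g : E → E} {K : ℝ≥0}
    (hg : LipschitzWith K g) {h : ℝ} (hh : 0 ≤ h) (u v : E) :
    orbitSupNorm T (T h (u + h • g u) - T h (v + h • g v)) ≤
      (1 + h * C * K) * orbitSupNorm T (u - v) := by
  have hC : 0 ≤ C := (norm_nonneg _).trans (hT 0 le_rfl)
  have hstep : T h (u + h • g u) - T h (v + h • g v) = T h ((u - v) + h • (g u - g v)) := by
    rw [← map_sub, smul_sub]
    abel_nf
  have hnonlin : ‖h • (g u - g v)‖ ≤ h * (K * orbitSupNorm T (u - v)) := by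
    rw [norm_smul, Real.norm_of_nonneg hh, ← dist_eq_norm]
    gcongr
    exact (hg.dist_le_mul u v).trans
      (by rw [dist_eq_norm]; gcongr; exact norm_le_orbitSupNorm hT hT₀ _)
  calc orbitSupNorm T (T h (u + h • g u) - T h (v + h • g v))
      ≤ orbitSupNorm T ((u - v) + h • (g u - g v)) := by
        rw [hstep]; exact orbitSupNorm_apply_le hT hT_add hh _
    _ ≤ orbitSupNorm T (u - v) + C * ‖h • (g u - g v)‖ :=
        (orbitSupNorm_add_le hT _ _).trans (by gcongr; exact orbitSupNorm_le hT _)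
    _ ≤ orbitSupNorm T (u - v) + C * (h * (K * orbitSupNorm T (u - v))) := by gcongr
    _ = (1 + h * C * K) * orbitSupNorm T (u - v) := by ring

end OrbitSupNorm

section Opexp

variable {E : Type*} [NormedAddCommGroup E] [NormedSpace ℝ E] [CompleteSpace E]

theorem opexp_zero (A : E →L[ℝ] E) : opexp A 0 = 1 := by
  simp [opexp]

theorem opexp_add (A : E →L[ℝ] E) (s t : ℝ) : opexp A (s + t) = opexp A s * opexp A t := by
  let _ : NormedAlgebra ℚ (E →L[ℝ] E) := .restrictScalars ℚ ℝ (E →L[ℝ] E)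
  rw [opexp, opexp, opexp, add_smul]
  exact NormedSpace.exp_add_of_commute ((Commute.refl A).smul_left s |>.smul_right t)

end Opexp

theorem stmt_14_general {E : Type*} [NormedAddCommGroup E] [NormedSpace ℝ E] [CompleteSpace E]
    (A : E →L[ℝ] E) (C_E : ℝ)
    (hA : ∀ t : ℝ, 0 ≤ t → ‖opexp A (-t)‖ ≤ C_E)
    (g : E → E) (L : ℝ) (hL : 0 ≤ L) (hg : LipschitzWith (Real.toNNReal L) g)
    (h : ℝ) (hh : 0 ≤ h) (u v : E) :
    (⨆ t : Set.Ici (0 : ℝ), ‖opexp A (-(t : ℝ))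
        (opexp A (-h) (u + h • g u) - opexp A (-h) (v + h • g v))‖) ≤
      (1 + h * C_E * L) * ⨆ t : Set.Ici (0 : ℝ), ‖opexp A (-(t : ℝ)) (u - v)‖ := by
  have hstep := orbitSupNorm_lawsonEuler_sub_le (T := fun t => opexp A (-t)) hA
    (by simp only [neg_zero, opexp_zero]) (fun s t _ _ => by simp only [neg_add, opexp_add])
    hg hh u v
  rwa [Real.coe_toNNReal L hL] at hstep

/-- Stability estimate (proof of Theorem 4.6): in the equivalent norm
`N(v) = ⨆_{t≥0} ‖exp(-tA)v‖`, the Lawson–Euler step `Φ(v) = exp(-hA)(v + h g(v))`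
satisfies `N(Φ(u) - Φ(v)) ≤ (1 + h C_E L) N(u - v)`. -/
theorem stmt_14 {E : Type*} [NormedAddCommGroup E] [NormedSpace ℝ E] [CompleteSpace E]
    (A : E →L[ℝ] E) (C_E : ℝ) (hCE : 1 ≤ C_E)
    (hA : ∀ t : ℝ, 0 ≤ t → ‖opexp A (-t)‖ ≤ C_E)
    (g : E → E) (L : ℝ) (hL : 0 ≤ L) (hg : LipschitzWith (Real.toNNReal L) g)
    (h : ℝ) (hh : 0 ≤ h) (u v : E) :
    (⨆ t : Set.Ici (0 : ℝ), ‖opexp A (-(t : ℝ))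
        (opexp A (-h) (u + h • g u) - opexp A (-h) (v + h • g v))‖) ≤
      (1 + h * C_E * L) * ⨆ t : Set.Ici (0 : ℝ), ‖opexp A (-(t : ℝ)) (u - v)‖ :=
  stmt_14_general A C_E hA g L hL hg h hh u v
end

section
/- Let d ∈ ℕ, β ∈ ℝ, and let u : EuclideanSpace ℝ (Fin d) → ℂ be twice continuously differentiable. Write ∂ⱼu(x) = fderiv ℝ u x (e_j) for the partial derivative in the j-th standard basis direction, Δu(x) = ∑_j fderiv ℝ (fun y => fderiv ℝ u y (e_j)) x (e_j) for the Laplacian, and define g(v) = i·β·v²·conj(v) for v ∈ ℂ. Then for every x: -i·Δ(fun y => g(u y))(x) + i·β·( (u x)²·conj(i·Δu(x)) + 2·(u x)·conj(u x)·(i·Δu(x)) ) = 2·β·( conj(u x)·∑_j (∂ⱼu(x))² + 2·(u x)·∑_j ∂ⱼu(x)·conj(∂ⱼu(x)) + (u x)²·conj(Δu(x)) ). -/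
/-
Both Δ and ∂ⱼ commute with complex conjugation, and Δ obeys the Leibniz rule
`Δ(fg) = (Δf) g + 2 ∇f·∇g + f Δg`. Expanding `Δ(u · u · ū)` with it, the term in
`u ū Δu` cancels against the second summand of the left-hand side, which instead doubles
the term in `u² Δū`.
-/

/-- The `j`-th partial derivative `∂ⱼu(x) = fderiv ℝ u x (e_j)` of a function on
`EuclideanSpace ℝ (Fin d)`, where `e_j` is the `j`-th standard basis vector. -/
noncomputable def pd {d : ℕ} (u : EuclideanSpace ℝ (Fin d) → ℂ) (j : Fin d)
    (x : EuclideanSpace ℝ (Fin d)) : ℂ :=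
  fderiv ℝ u x (EuclideanSpace.single j (1 : ℝ))

/-- The Laplacian `Δu(x) = ∑ⱼ ∂ⱼ∂ⱼu(x)`. -/
noncomputable def lap {d : ℕ} (u : EuclideanSpace ℝ (Fin d) → ℂ)
    (x : EuclideanSpace ℝ (Fin d)) : ℂ :=
  ∑ j : Fin d, fderiv ℝ (fun y => fderiv ℝ u y (EuclideanSpace.single j (1 : ℝ))) x
    (EuclideanSpace.single j (1 : ℝ))

open ComplexConjugate

section Laplacian

variable {d : ℕ} {f g : EuclideanSpace ℝ (Fin d) → ℂ} {x : EuclideanSpace ℝ (Fin d)}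

lemma lap_eq_sum_pd_pd (f : EuclideanSpace ℝ (Fin d) → ℂ) (x : EuclideanSpace ℝ (Fin d)) :
    lap f x = ∑ j, pd (pd f j) j x :=
  rfl

lemma pd_add (hf : DifferentiableAt ℝ f x) (hg : DifferentiableAt ℝ g x) (j : Fin d) :
    pd (fun y => f y + g y) j x = pd f j x + pd g j x := by
  rw [pd, fderiv_fun_add hf hg, add_apply]
  rfl

lemma pd_mul (hf : DifferentiableAt ℝ f x) (hg : DifferentiableAt ℝ g x) (j : Fin d) :
    pd (fun y => f y * g y) j x = pd f j x * g x + f x * pd g j x := by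
  rw [pd, fderiv_fun_mul hf hg, add_apply, smul_apply, smul_apply, smul_eq_mul, smul_eq_mul]
  unfold pd
  ring

lemma pd_const_mul (c : ℂ) (f : EuclideanSpace ℝ (Fin d) → ℂ) (j : Fin d) :
    pd (fun y => c * f y) j = fun y => c * pd f j y := by
  funext y
  rw [pd, show (fun y => c * f y) = c • f from rfl, fderiv_const_smul_field, Pi.smul_apply,
    smul_apply, smul_eq_mul]
  rfl

lemma pd_conj (f : EuclideanSpace ℝ (Fin d) → ℂ) (j : Fin d) :
    pd (fun y => conj (f y)) j = fun y => conj (pd f j y) := by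
  funext y
  simp only [pd, ← Complex.star_def, fderiv_star]
  rfl

lemma contDiff_pd {n : WithTop ℕ∞} (hf : ContDiff ℝ (n + 1) f) (j : Fin d) :
    ContDiff ℝ n (pd f j) :=
  (hf.fderiv_right le_rfl).clm_apply contDiff_const

lemma differentiable_pd (hf : ContDiff ℝ 2 f) (j : Fin d) : Differentiable ℝ (pd f j) :=
  (contDiff_pd (n := 1) hf j).differentiable one_ne_zero

lemma lap_const_mul (c : ℂ) (f : EuclideanSpace ℝ (Fin d) → ℂ) (x : EuclideanSpace ℝ (Fin d)) :
    lap (fun y => c * f y) x = c * lap f x := by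
  simp only [lap_eq_sum_pd_pd, pd_const_mul, Finset.mul_sum]

lemma lap_conj (f : EuclideanSpace ℝ (Fin d) → ℂ) (x : EuclideanSpace ℝ (Fin d)) :
    lap (fun y => conj (f y)) x = conj (lap f x) := by
  simp only [lap_eq_sum_pd_pd, pd_conj, map_sum]

lemma lap_mul (hf : ContDiff ℝ 2 f) (hg : ContDiff ℝ 2 g) (x : EuclideanSpace ℝ (Fin d)) :
    lap (fun y => f y * g y) x = lap f x * g x + 2 * ∑ j, pd f j x * pd g j x + f x * lap g x := by
  have hf₁ : Differentiable ℝ f := hf.differentiable (by norm_num)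
  have hg₁ : Differentiable ℝ g := hg.differentiable (by norm_num)
  have hpd_mul (j : Fin d) : pd (fun y => f y * g y) j = fun y => pd f j y * g y + f y * pd g j y :=
    funext fun y => pd_mul (hf₁ y) (hg₁ y) j
  simp only [lap_eq_sum_pd_pd, hpd_mul]
  rw [Finset.mul_sum, Finset.sum_mul, Finset.mul_sum, ← Finset.sum_add_distrib,
    ← Finset.sum_add_distrib]
  refine Finset.sum_congr rfl fun j _ => ?_
  have hf₂ := differentiable_pd hf j x
  have hg₂ := differentiable_pd hg j x
  rw [pd_add (f := fun y => pd f j y * g y) (g := fun y => f y * pd g j y)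
      (hf₂.mul (hg₁ x)) ((hf₁ x).mul hg₂), pd_mul hf₂ (hg₁ x), pd_mul (hf₁ x) hg₂]
  ring

end Laplacian

/-- The commutator computation (5.13) for the nonlinear Schrödinger equation: with
`g(v) = iβ v² v̄`, one has
`-iΔ(g∘u)(x) + iβ( u² conj(iΔu) + 2u ū (iΔu) ) = 2β( ū ∇u·∇u + 2u ∇u·∇ū + u² Δū )`. -/
theorem stmt_19 {d : ℕ} (β : ℝ) (u : EuclideanSpace ℝ (Fin d) → ℂ)
    (hu : ContDiff ℝ 2 u) (x : EuclideanSpace ℝ (Fin d)) :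
    -Complex.I * lap (fun y => Complex.I * β * (u y) ^ 2 * (starRingEnd ℂ) (u y)) x +
      Complex.I * β * ((u x) ^ 2 * (starRingEnd ℂ) (Complex.I * lap u x) +
        2 * u x * (starRingEnd ℂ) (u x) * (Complex.I * lap u x)) =
    2 * β * ((starRingEnd ℂ) (u x) * ∑ j : Fin d, (pd u j x) ^ 2 +
      2 * u x * ∑ j : Fin d, pd u j x * (starRingEnd ℂ) (pd u j x) +
      (u x) ^ 2 * (starRingEnd ℂ) (lap u x)) := by
  have hu₁ : Differentiable ℝ u := hu.differentiable (by norm_num)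
  have hū : ContDiff ℝ 2 fun y => conj (u y) := Complex.conjCLE.contDiff.comp hu
  have hcubic : (fun y => Complex.I * β * (u y) ^ 2 * conj (u y))
      = fun y => Complex.I * β * (u y * u y * conj (u y)) := by
    funext y; ring
  rw [hcubic, lap_const_mul, lap_mul (hu.mul hu) hū, lap_mul hu hu, lap_conj]
  simp only [pd_mul (hu₁ x) (hu₁ x), pd_conj, map_mul, Complex.conj_I]
  have hsq : ∑ j, pd u j x * pd u j x = ∑ j, pd u j x ^ 2 := by simp only [sq]
  have hgrad : ∑ j, (pd u j x * u x + u x * pd u j x) * conj (pd u j x)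
      = 2 * u x * ∑ j, pd u j x * conj (pd u j x) := by
    rw [Finset.mul_sum]
    exact Finset.sum_congr rfl fun j _ => by ring
  rw [hsq, hgrad]
  linear_combination (-β * (2 * conj (u x) * ∑ j, pd u j x ^ 2
    + 4 * u x * ∑ j, pd u j x * conj (pd u j x) + 2 * u x ^ 2 * conj (lap u x))) * Complex.I_mul_I
end
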